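/- Define integer sequences h, k by h(0)=0, h(1)=1, k(0)=1, k(1)=1, and h(n+1) = h(n) + n·h(n−1), k(n+1) = k(n) + n·k(n−1) for n ≥ 1 (so the convergents h(n)/k(n) take the values 0/1, 1/1, 1/2, 3/4, 6/10, 18/26, 48/76, 156/232, …). Then the sequence h(n)/k(n) converges as n → ∞, and its limit equals √e · ∫_1^∞ e^{-t²/2} dt. -/

import Mathlib

/-!
Put `w(u) = e^{-(u-1)²/2}`. Integrating `(uⁿ⁺¹ w)' = (n+1) uⁿ w + uⁿ⁺¹ w - uⁿ⁺² w` shows that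
`I_n = ∫_ℝ uⁿ w` and `J_n = ∫_0^∞ uⁿ w` both satisfy the recurrence
`X_{n+2} = X_{n+1} + (n+1) X_n` of the convergents. Matching initial values gives
`I_n = √(2π) k_n` and `J_n = J_0 k_n + e^{-1/2} h_n`, so `h_n / k_n = √e (√(2π) J_n / I_n - J_0)`.
The part of `I_n` from `u < 0` is `±∫_0^∞ uⁿ e^{-2u} w`. Beyond `A = √n / 3` the factor `e^{-2u}`
makes it small against `J_n`, and below `A` it is at most `A^{n+1}`, which is tiny against the
contribution of `[2A, 3A]` to `J_n`. Hence `J_n / I_n → 1`, and the limit is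
`√e (√(2π) - J_0) = √e ∫_1^∞ e^{-t²/2}`.
-/

/-- Numerators of the convergents of Euler's continued fraction
`1/(1 + 1/(1 + 2/(1 + 3/(1 + 4/(1 + ⋯)))))` (§29). -/
def eulerCFh : ℕ → ℤ
  | 0 => 0
  | 1 => 1
  | n + 2 => eulerCFh (n + 1) + ((n + 1 : ℕ) : ℤ) * eulerCFh n

/-- Denominators of the convergents. -/
def eulerCFk : ℕ → ℤ
  | 0 => 1
  | 1 => 1
  | n + 2 => eulerCFk (n + 1) + ((n + 1 : ℕ) : ℤ) * eulerCFk n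

open Real MeasureTheory Filter Set Topology

section

variable (n : ℕ)

lemma eulerCFk_pos : 0 < eulerCFk n := by
  induction n using Nat.twoStepInduction with
  | zero | one => decide
  | more n hn hn1 =>
    rw [eulerCFk]
    positivity

lemma eq_mul_eulerCFk_add_mul_eulerCFh {x : ℕ → ℝ}
    (hx : ∀ n : ℕ, x (n + 2) = x (n + 1) + (n + 1) * x n) :
    x n = x 0 * eulerCFk n + (x 1 - x 0) * eulerCFh n := by
  induction n using Nat.twoStepInduction with
  | zero => simp [eulerCFh, eulerCFk]
  | one => simp [eulerCFh, eulerCFk]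
  | more n hn hn1 =>
    rw [hx, hn, hn1, eulerCFk, eulerCFh]
    push_cast
    ring

end

noncomputable section

def gaussWeight (c : ℝ) (n : ℕ) (u : ℝ) : ℝ := u ^ n * exp (-(u - c) ^ 2 / 2)

def gaussMoment (c : ℝ) (n : ℕ) : ℝ := ∫ u, gaussWeight c n u

def gaussHalfMoment (c : ℝ) (n : ℕ) : ℝ := ∫ u in Ioi 0, gaussWeight c n u

end

section

variable (c : ℝ) (n : ℕ)

lemma integrable_pow_mul_exp_neg_sq_div_two :
    Integrable fun x : ℝ => x ^ n * exp (-x ^ 2 / 2) := by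
  refine (integrable_rpow_mul_exp_neg_mul_sq (b := 1 / 2) (by norm_num)
    (s := n) (by linarith [n.cast_nonneg (α := ℝ)])).congr (.of_forall fun x => ?_)
  simp only [rpow_natCast]
  ring_nf

lemma integrable_gaussWeight : Integrable (gaussWeight c n) := by
  have hpoly : Integrable fun x : ℝ => (x + c) ^ n * exp (-x ^ 2 / 2) := by
    simp_rw [add_pow, Finset.sum_mul]
    exact integrable_finsetSum _ fun k _ =>
      ((integrable_pow_mul_exp_neg_sq_div_two k).const_mul (c ^ (n - k) * n.choose k)).congr
        (.of_forall fun x => by ring)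
  unfold gaussWeight
  simpa only [sub_add_cancel] using hpoly.comp_sub_right c

lemma hasDerivAt_exp_neg_sq_sub_div_two (u : ℝ) :
    HasDerivAt (fun u => exp (-(u - c) ^ 2 / 2)) (-(u - c) * exp (-(u - c) ^ 2 / 2)) u := by
  have h : HasDerivAt (fun u => -(u - c) ^ 2 / 2) (-(u - c)) u := by
    refine ((((hasDerivAt_id' u).sub_const c).pow 2).neg.div_const 2).congr_deriv ?_
    ring
  exact h.exp.congr_deriv (mul_comm _ _)

lemma hasDerivAt_gaussWeight_zero (u : ℝ) :
    HasDerivAt (gaussWeight c 0) (c * gaussWeight c 0 u - gaussWeight c 1 u) u := by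
  convert hasDerivAt_exp_neg_sq_sub_div_two c u using 1
  · ext; simp [gaussWeight]
  · simp [gaussWeight]; ring

lemma hasDerivAt_gaussWeight_succ (u : ℝ) :
    HasDerivAt (gaussWeight c (n + 1))
      ((n + 1) * gaussWeight c n u + c * gaussWeight c (n + 1) u - gaussWeight c (n + 2) u) u := by
  refine ((hasDerivAt_pow (n + 1) u).mul (hasDerivAt_exp_neg_sq_sub_div_two c u)).congr_deriv ?_
  simp only [gaussWeight]
  push_cast
  ring

lemma tendsto_gaussWeight_atTop : Tendsto (gaussWeight c n) atTop (𝓝 0) := by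
  cases n with
  | zero =>
    exact tendsto_zero_of_hasDerivAt_of_integrableOn_Ioi (a := 0)
      (fun u _ => hasDerivAt_gaussWeight_zero c u)
      (((integrable_gaussWeight c 0).const_mul c).sub (integrable_gaussWeight c 1)).integrableOn
      (integrable_gaussWeight c 0).integrableOn
  | succ n =>
    exact tendsto_zero_of_hasDerivAt_of_integrableOn_Ioi (a := 0)
      (fun u _ => hasDerivAt_gaussWeight_succ c n u)
      ((((integrable_gaussWeight c n).const_mul _).add
        ((integrable_gaussWeight c (n + 1)).const_mul c)).sub
        (integrable_gaussWeight c (n + 2))).integrableOn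
      (integrable_gaussWeight c (n + 1)).integrableOn

lemma setIntegral_deriv_gaussWeight_succ (s : Set ℝ) :
    ∫ u in s, ((n + 1) * gaussWeight c n u + c * gaussWeight c (n + 1) u
        - gaussWeight c (n + 2) u) =
      (n + 1) * (∫ u in s, gaussWeight c n u) + c * (∫ u in s, gaussWeight c (n + 1) u)
        - ∫ u in s, gaussWeight c (n + 2) u := by
  have hint (m : ℕ) : IntegrableOn (gaussWeight c m) s := (integrable_gaussWeight c m).integrableOn
  rw [integral_sub, integral_add, integral_const_mul, integral_const_mul]
  exacts [(hint n).const_mul _, (hint _).const_mul c,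
    ((hint n).const_mul _).add ((hint _).const_mul c), hint _]

lemma gaussMoment_add_two :
    gaussMoment c (n + 2) = c * gaussMoment c (n + 1) + (n + 1) * gaussMoment c n := by
  have h := integral_eq_zero_of_hasDerivAt_of_integrable (hasDerivAt_gaussWeight_succ c n)
    ((((integrable_gaussWeight c n).const_mul _).add
      ((integrable_gaussWeight c (n + 1)).const_mul c)).sub (integrable_gaussWeight c (n + 2)))
    (integrable_gaussWeight c (n + 1))
  rw [← setIntegral_univ, setIntegral_deriv_gaussWeight_succ] at h
  simp only [gaussMoment, setIntegral_univ] at h ⊢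
  linarith

lemma gaussMoment_one : gaussMoment c 1 = c * gaussMoment c 0 := by
  have h := integral_eq_zero_of_hasDerivAt_of_integrable (hasDerivAt_gaussWeight_zero c)
    (((integrable_gaussWeight c 0).const_mul c).sub (integrable_gaussWeight c 1))
    (integrable_gaussWeight c 0)
  rw [integral_sub ((integrable_gaussWeight c 0).const_mul c) (integrable_gaussWeight c 1),
    integral_const_mul] at h
  simp only [gaussMoment]
  linarith

lemma gaussMoment_zero : gaussMoment c 0 = √(2 * π) := by
  have hfun : gaussWeight c 0 = fun u => exp (-(1 / 2) * (u - c) ^ 2) := by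
    ext u; simp only [gaussWeight]; ring_nf
  rw [gaussMoment, hfun, integral_sub_right_eq_self (fun u => exp (-(1 / 2) * u ^ 2)) c,
    integral_gaussian]
  norm_num [div_div_eq_mul_div, mul_comm]

lemma gaussHalfMoment_add_two :
    gaussHalfMoment c (n + 2)
      = c * gaussHalfMoment c (n + 1) + (n + 1) * gaussHalfMoment c n := by
  have h := integral_Ioi_of_hasDerivAt_of_tendsto' (a := 0)
    (fun u _ => hasDerivAt_gaussWeight_succ c n u)
    ((((integrable_gaussWeight c n).const_mul _).add
      ((integrable_gaussWeight c (n + 1)).const_mul c)).sub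
      (integrable_gaussWeight c (n + 2))).integrableOn
    (tendsto_gaussWeight_atTop c (n + 1))
  have h0 : gaussWeight c (n + 1) 0 = 0 := by simp [gaussWeight]
  rw [setIntegral_deriv_gaussWeight_succ, h0] at h
  simp only [gaussHalfMoment]
  linarith

lemma gaussHalfMoment_one :
    gaussHalfMoment c 1 = c * gaussHalfMoment c 0 + exp (-c ^ 2 / 2) := by
  have h := integral_Ioi_of_hasDerivAt_of_tendsto' (a := 0)
    (fun u _ => hasDerivAt_gaussWeight_zero c u)
    (((integrable_gaussWeight c 0).const_mul c).sub (integrable_gaussWeight c 1)).integrableOn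
    (tendsto_gaussWeight_atTop c 0)
  rw [integral_sub ((integrable_gaussWeight c 0).const_mul c).integrableOn
    (integrable_gaussWeight c 1).integrableOn, integral_const_mul] at h
  have h0 : gaussWeight c 0 0 = exp (-c ^ 2 / 2) := by simp [gaussWeight]
  rw [h0] at h
  simp only [gaussHalfMoment]
  linarith

lemma gaussMoment_eq_gaussHalfMoment_add :
    gaussMoment c n = gaussHalfMoment c n + (-1) ^ n * gaussHalfMoment (-c) n := by
  have hrefl : ∫ u in Iic (0 : ℝ), gaussWeight c n u = (-1) ^ n * gaussHalfMoment (-c) n := by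
    have h := integral_comp_neg_Iic 0 fun u => (-1) ^ n * gaussWeight (-c) n u
    rw [neg_zero] at h
    rw [gaussHalfMoment, ← integral_const_mul, ← h]
    refine setIntegral_congr_fun measurableSet_Iic fun u _ => ?_
    rw [gaussWeight, gaussWeight, ← mul_assoc, ← mul_pow, neg_one_mul, neg_neg]
    ring_nf
  rw [gaussMoment, ← intervalIntegral.integral_Iic_add_Ioi
    (integrable_gaussWeight c n).integrableOn (integrable_gaussWeight c n).integrableOn,
    hrefl, add_comm]
  rfl

lemma gaussMoment_eq_sqrt_two_pi_mul_eulerCFk : gaussMoment 1 n = √(2 * π) * eulerCFk n := by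
  rw [eq_mul_eulerCFk_add_mul_eulerCFh n (x := gaussMoment 1) fun n => by
      rw [gaussMoment_add_two, one_mul],
    gaussMoment_one, one_mul, sub_self, zero_mul, add_zero, gaussMoment_zero]

lemma gaussHalfMoment_eq_mul_eulerCFk_add_mul_eulerCFh :
    gaussHalfMoment 1 n = gaussHalfMoment 1 0 * eulerCFk n + exp (-1 / 2) * eulerCFh n := by
  rw [eq_mul_eulerCFk_add_mul_eulerCFh n (x := gaussHalfMoment 1) fun n => by
      rw [gaussHalfMoment_add_two, one_mul],
    gaussHalfMoment_one]
  norm_num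

lemma gaussWeight_nonneg {u : ℝ} (hu : 0 ≤ u) : 0 ≤ gaussWeight c n u := by
  unfold gaussWeight; positivity

lemma gaussWeight_neg (u : ℝ) :
    gaussWeight (-c) n u = exp (-(2 * c * u)) * gaussWeight c n u := by
  rw [gaussWeight, gaussWeight, mul_left_comm, ← exp_add]
  ring_nf

lemma le_gaussHalfMoment {A : ℝ} (hc : 0 ≤ c) (hA : 0 ≤ A) :
    A * (2 * A) ^ n * exp (-(9 * A ^ 2 + c ^ 2) / 2) ≤ gaussHalfMoment c n := by
  have hpoint : ∀ u ∈ Ioc (2 * A) (3 * A),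
      (2 * A) ^ n * exp (-(9 * A ^ 2 + c ^ 2) / 2) ≤ gaussWeight c n u := by
    rintro u ⟨hu₁, hu₂⟩
    have hsq : (u - c) ^ 2 ≤ 9 * A ^ 2 + c ^ 2 := by nlinarith
    exact mul_le_mul (pow_le_pow_left₀ (by positivity) hu₁.le n)
      (exp_le_exp.mpr (by linarith)) (exp_pos _).le (pow_nonneg (by linarith) n)
  calc A * (2 * A) ^ n * exp (-(9 * A ^ 2 + c ^ 2) / 2)
      = ∫ _ in Ioc (2 * A) (3 * A), (2 * A) ^ n * exp (-(9 * A ^ 2 + c ^ 2) / 2) := by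
        rw [setIntegral_const, volume_real_Ioc_of_le (by linarith), smul_eq_mul]
        ring
    _ ≤ ∫ u in Ioc (2 * A) (3 * A), gaussWeight c n u :=
        setIntegral_mono_on (integrableOn_const measure_Ioc_lt_top.ne)
          (integrable_gaussWeight c n).integrableOn measurableSet_Ioc hpoint
    _ ≤ gaussHalfMoment c n :=
        setIntegral_mono_set (integrable_gaussWeight c n).integrableOn
          ((ae_restrict_iff' measurableSet_Ioi).2 (.of_forall fun u hu =>
            gaussWeight_nonneg c n (le_of_lt hu)))
          (Ioc_subset_Ioi_self.trans (Ioi_subset_Ioi (by linarith))).eventuallyLE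

lemma gaussHalfMoment_pos (hc : 0 ≤ c) : 0 < gaussHalfMoment c n :=
  lt_of_lt_of_le (by positivity) (le_gaussHalfMoment c n hc zero_le_one)

lemma gaussHalfMoment_neg_le {A : ℝ} (hc : 0 ≤ c) (hA : 0 ≤ A) :
    gaussHalfMoment (-c) n ≤ A ^ (n + 1) + exp (-(2 * c * A)) * gaussHalfMoment c n := by
  have hint (d : ℝ) (s : Set ℝ) : IntegrableOn (gaussWeight d n) s :=
    (integrable_gaussWeight d n).integrableOn
  have hnear : ∫ u in Ioc 0 A, gaussWeight (-c) n u ≤ A ^ (n + 1) := by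
    calc ∫ u in Ioc 0 A, gaussWeight (-c) n u ≤ ∫ _ in Ioc 0 A, A ^ n := by
          refine setIntegral_mono_on (hint _ _) (integrableOn_const measure_Ioc_lt_top.ne)
            measurableSet_Ioc fun u ⟨hu₀, huA⟩ => ?_
          calc gaussWeight (-c) n u ≤ u ^ n * 1 :=
                mul_le_mul_of_nonneg_left (exp_le_one_iff.mpr (by nlinarith)) (by positivity)
            _ ≤ A ^ n := by rw [mul_one]; exact pow_le_pow_left₀ hu₀.le huA n
      _ = A ^ (n + 1) := by
          rw [setIntegral_const, volume_real_Ioc_of_le hA, smul_eq_mul, sub_zero, pow_succ']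
  have hfar : ∫ u in Ioi A, gaussWeight (-c) n u ≤ exp (-(2 * c * A)) * gaussHalfMoment c n := by
    calc ∫ u in Ioi A, gaussWeight (-c) n u
        ≤ ∫ u in Ioi A, exp (-(2 * c * A)) * gaussWeight c n u :=
          setIntegral_mono_on (hint _ _) ((hint c _).const_mul _) measurableSet_Ioi fun u hu => by
            rw [gaussWeight_neg]
            exact mul_le_mul_of_nonneg_right (exp_le_exp.mpr (by nlinarith [hu.out]))
              (gaussWeight_nonneg c n (hA.trans hu.out.le))
      _ ≤ exp (-(2 * c * A)) * gaussHalfMoment c n := by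
          rw [integral_const_mul]
          refine mul_le_mul_of_nonneg_left (setIntegral_mono_set (hint c _) ?_
            (Ioi_subset_Ioi hA).eventuallyLE) (exp_pos _).le
          exact (ae_restrict_iff' measurableSet_Ioi).2 (.of_forall fun u hu =>
            gaussWeight_nonneg c n (le_of_lt hu))
  rw [gaussHalfMoment, ← Ioc_union_Ioi_eq_Ioi hA,
    setIntegral_union (Ioc_disjoint_Ioi le_rfl) measurableSet_Ioi (hint _ _) (hint _ _)]
  exact add_le_add hnear hfar

lemma sqrt_exp_one_div_two_lt_one : √(exp 1) / 2 < 1 := by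
  rw [div_lt_one two_pos, sqrt_lt' two_pos]
  linarith [exp_one_lt_d9]

lemma tendsto_gaussHalfMoment_neg_div (hc : 0 < c) :
    Tendsto (fun n => gaussHalfMoment (-c) n / gaussHalfMoment c n) atTop (𝓝 0) := by
  have hbound (n : ℕ) : gaussHalfMoment (-c) n / gaussHalfMoment c n
      ≤ exp (c ^ 2 / 2) * (√(exp 1) / 2) ^ n + exp (-(2 * c * (√n / 3))) := by
    set A := √n / 3
    have hA : 0 ≤ A := by positivity
    have h9 : 9 * A ^ 2 = n := by
      rw [div_pow, sq_sqrt n.cast_nonneg]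
      ring
    -- the choice `9 A² = n` makes the Gaussian factor of the lower bound cancel `√e ^ n`
    have hcancel : A ^ (n + 1) = exp (c ^ 2 / 2) * (√(exp 1) / 2) ^ n
        * (A * (2 * A) ^ n * exp (-(9 * A ^ 2 + c ^ 2) / 2)) := by
      have hexp : exp (c ^ 2 / 2) * exp (1 / 2) ^ n * exp (-(9 * A ^ 2 + c ^ 2) / 2) = 1 := by
        rw [← exp_nat_mul, ← exp_add, ← exp_add, h9, exp_eq_one_iff]
        ring
      have hpow : (exp (1 / 2) / 2) ^ n * (2 * A) ^ n = exp (1 / 2) ^ n * A ^ n := by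
        rw [← mul_pow, ← mul_pow]
        ring
      rw [← exp_half]
      calc A ^ (n + 1)
          = A * A ^ n * (exp (c ^ 2 / 2) * exp (1 / 2) ^ n * exp (-(9 * A ^ 2 + c ^ 2) / 2)) := by
            rw [hexp]; ring
        _ = exp (c ^ 2 / 2) * ((exp (1 / 2) / 2) ^ n * (2 * A) ^ n)
              * (A * exp (-(9 * A ^ 2 + c ^ 2) / 2)) := by
            rw [hpow]; ring
        _ = _ := by ring
    have hJ := gaussHalfMoment_pos c n hc.le
    rw [div_le_iff₀ hJ, add_mul]
    calc gaussHalfMoment (-c) n ≤ A ^ (n + 1) + exp (-(2 * c * A)) * gaussHalfMoment c n :=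
          gaussHalfMoment_neg_le c n hc.le hA
      _ ≤ _ := by
          rw [hcancel]
          gcongr
          exact le_gaussHalfMoment c n hc.le hA
  refine squeeze_zero (fun n => div_nonneg ?_ (gaussHalfMoment_pos c n hc.le).le) hbound ?_
  · exact setIntegral_nonneg measurableSet_Ioi fun u hu => gaussWeight_nonneg _ n (le_of_lt hu)
  · have hgeom := (tendsto_pow_atTop_nhds_zero_of_lt_one (by positivity)
      sqrt_exp_one_div_two_lt_one).const_mul (exp (c ^ 2 / 2))
    have hsqrt : Tendsto (fun n : ℕ => 2 * c * (√n / 3)) atTop atTop :=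
      ((tendsto_sqrt_atTop.comp tendsto_natCast_atTop_atTop).atTop_div_const
        three_pos).const_mul_atTop (by positivity)
    simpa using hgeom.add (tendsto_exp_atBot.comp (tendsto_neg_atTop_atBot.comp hsqrt))

lemma tendsto_gaussHalfMoment_div_gaussMoment (hc : 0 < c) :
    Tendsto (fun n => gaussHalfMoment c n / gaussMoment c n) atTop (𝓝 1) := by
  have hsign : Tendsto (fun n => (-1) ^ n * (gaussHalfMoment (-c) n / gaussHalfMoment c n))
      atTop (𝓝 0) := by
    refine tendsto_zero_iff_norm_tendsto_zero.2 ?_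
    simpa [norm_mul] using (tendsto_gaussHalfMoment_neg_div c hc).norm
  have hratio : Tendsto (fun n => gaussMoment c n / gaussHalfMoment c n) atTop (𝓝 1) := by
    have hsum : Tendsto (fun n => 1 + (-1) ^ n * (gaussHalfMoment (-c) n / gaussHalfMoment c n))
        atTop (𝓝 1) := by simpa using hsign.const_add 1
    refine hsum.congr fun n => ?_
    rw [gaussMoment_eq_gaussHalfMoment_add, add_div, div_self (gaussHalfMoment_pos c n hc.le).ne']
    ring
  simpa using hratio.inv₀ one_ne_zero

lemma setIntegral_Ioi_comp_add_right (f : ℝ → ℝ) (a b : ℝ) :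
    ∫ x in Ioi a, f (x + b) = ∫ x in Ioi (a + b), f x := by
  have h := (measurePreserving_add_right volume b).setIntegral_preimage_emb
    (measurableEmbedding_addRight b) f (Ioi (a + b))
  rwa [preimage_add_const_Ioi, add_sub_cancel_right] at h

lemma gaussHalfMoment_neg_one_zero :
    gaussHalfMoment (-1) 0 = ∫ t in Ioi 1, exp (-t ^ 2 / 2) := by
  rw [← zero_add (1 : ℝ), ← setIntegral_Ioi_comp_add_right]
  simp [gaussHalfMoment, gaussWeight]

end

/-- The convergents `0/1, 1/1, 1/2, 3/4, 6/10, 18/26, 48/76, 156/232, …` of Euler's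
continued fraction (§29) converge, with limit `√e ∫_1^∞ e^{-t²/2} dt`. -/
theorem eulerCF_section29_tendsto :
    Filter.Tendsto (fun n : ℕ => (eulerCFh n : ℝ) / (eulerCFk n : ℝ)) Filter.atTop
      (nhds (Real.sqrt (Real.exp 1) * ∫ t in Set.Ioi (1 : ℝ), Real.exp (-t ^ 2 / 2))) := by
  have hconv (n : ℕ) : (eulerCFh n : ℝ) / eulerCFk n
      = exp (1 / 2)
        * (√(2 * π) * (gaussHalfMoment 1 n / gaussMoment 1 n) - gaussHalfMoment 1 0) := by
    have hk : (eulerCFk n : ℝ) ≠ 0 := by exact_mod_cast (eulerCFk_pos n).ne'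
    have hπ : √(2 * π) ≠ 0 := by positivity
    rw [gaussHalfMoment_eq_mul_eulerCFk_add_mul_eulerCFh, gaussMoment_eq_sqrt_two_pi_mul_eulerCFk]
    field_simp
    rw [add_sub_cancel_left, mul_left_comm, ← exp_add]
    norm_num
  have hlim : √(exp 1) * ∫ t in Ioi (1 : ℝ), exp (-t ^ 2 / 2)
      = exp (1 / 2) * (√(2 * π) * 1 - gaussHalfMoment 1 0) := by
    rw [← gaussHalfMoment_neg_one_zero, ← gaussMoment_zero 1, gaussMoment_eq_gaussHalfMoment_add,
      ← exp_half]
    ring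
  rw [funext hconv, hlim]
  exact (((tendsto_gaussHalfMoment_div_gaussMoment 1 one_pos).const_mul _).sub_const _).const_mul
    _
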